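/- arXiv:2305.16299 — 5 statements merged into one kernel-verified Lean document; each statement's English description precedes it below -/
import Mathlib

section
/- Every nonempty word w over a finite totally ordered alphabet admits a unique factorization w = ℓ₁ℓ₂...ℓ_k where each ℓ_j is a Lyndon word and ℓ₁ ≥ ℓ₂ ≥ ... ≥ ℓ_k in lexicographic order. -/
/-!
Existence: prepend the letters of the word one at a time. A Lyndon word `u` put in front of a
factorization `m :: M` is either kept as a new first factor (if `m ≤ u`), or `u < m`, in which case
`u ++ m` is again Lyndon and is put in front of `M` instead.

Uniqueness: every nonempty suffix of the word starts with a nonempty suffix of some factor, which is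
at least that factor and hence at least the last one. So the last factor is the least nonempty
suffix of the word, determined by the word alone; cancel it and induct.
-/

def IsLyndon {α : Type*} [LinearOrder α] (w : List α) : Prop :=
  w ≠ [] ∧ ∀ s : List α, s <:+ w → s ≠ [] → s ≠ w → List.Lex (· < ·) w s

namespace List

variable {α : Type*}

theorem IsSuffix.append_cases {s u v : List α} (h : s <:+ u ++ v) :
    s <:+ v ∨ ∃ u', u' <:+ u ∧ s = u' ++ v := by
  rcases le_or_gt s.length v.length with hle | hlt
  · exact Or.inl (suffix_of_suffix_length_le h (suffix_append u v) hle)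
  · obtain ⟨u', rfl⟩ := suffix_of_suffix_length_le (suffix_append u v) h hlt.le
    exact Or.inr ⟨u', suffix_append_self_iff.mp h, rfl⟩

variable [LinearOrder α]

/-- Core's `IsPrefix.le` is stated for core's `≤` on lists, which is not syntactically the `≤`
of Mathlib's `LinearOrder (List α)`. -/
theorem IsPrefix.le' {u v : List α} (h : u <+: v) : u ≤ v :=
  not_lt.mp h.le

theorem append_lt_append_of_lt_of_not_prefix {u v : List α} (h : u < v) (hp : ¬ u <+: v)
    (x y : List α) : u ++ x < v ++ y := by
  induction h with
  | nil => exact absurd nil_prefix hp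
  | cons _ ih => exact .cons (ih fun hq => hp (cons_prefix_cons.mpr ⟨rfl, hq⟩))
  | rel h => exact .rel h

end List

namespace IsLyndon

variable {α : Type*} [LinearOrder α]

theorem ne_nil {w : List α} (hw : IsLyndon w) : w ≠ [] := hw.1

theorem lt_of_suffix {w s : List α} (hw : IsLyndon w) (hs : s <:+ w) (hne : s ≠ [])
    (hsw : s ≠ w) : w < s :=
  hw.2 s hs hne hsw

theorem le_of_suffix {w s : List α} (hw : IsLyndon w) (hs : s <:+ w) (hne : s ≠ []) : w ≤ s := by
  rcases eq_or_ne s w with rfl | hsw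
  · exact le_rfl
  · exact (hw.lt_of_suffix hs hne hsw).le

theorem singleton (a : α) : IsLyndon [a] := by
  refine ⟨List.cons_ne_nil a [], fun s hs hne hsa => ?_⟩
  rcases List.suffix_cons_iff.mp hs with h | h
  · exact absurd h hsa
  · exact absurd (List.suffix_nil.mp h) hne

theorem append_lt_right {u v : List α} (hu : IsLyndon u) (hv : IsLyndon v) (huv : u < v) :
    u ++ v < v := by
  by_cases hp : u <+: v
  · obtain ⟨r, rfl⟩ := hp
    have hr : r ≠ [] := by rintro rfl; simp at huv
    have hrv : r ≠ u ++ r := by simpa using hu.ne_nil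
    exact List.append_left_lt (hv.lt_of_suffix (List.suffix_append u r) hr hrv)
  · simpa using List.append_lt_append_of_lt_of_not_prefix huv hp v []

theorem append {u v : List α} (hu : IsLyndon u) (hv : IsLyndon v) (huv : u < v) :
    IsLyndon (u ++ v) := by
  have huvv := hu.append_lt_right hv huv
  refine ⟨by simp [hu.ne_nil], fun s hs hne hsuv => ?_⟩
  rcases hs.append_cases with hsv | ⟨u', hu', rfl⟩
  · exact huvv.trans_le (hv.le_of_suffix hsv hne)
  · rcases eq_or_ne u' [] with rfl | hu'ne
    · simpa using huvv
    have hu'u : u' ≠ u := by rintro rfl; exact hsuv rfl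
    have hnp : ¬ u <+: u' := fun hp =>
      hu'u (hp.eq_of_length (le_antisymm hp.length_le hu'.length_le)).symm
    exact List.append_lt_append_of_lt_of_not_prefix (hu.lt_of_suffix hu' hu'ne hu'u) hnp v v

end IsLyndon

theorem le_of_suffix_flatten_of_isLyndon {α : Type*} [LinearOrder α] {b s : List α}
    {L : List (List α)} (hL : ∀ x ∈ L, IsLyndon x ∧ b ≤ x) (hs : s <:+ L.flatten)
    (hne : s ≠ []) : b ≤ s := by
  induction L with
  | nil => exact absurd (List.suffix_nil.mp hs) hne
  | cons x L ih =>
    have ih' := ih fun y hy => hL y (List.mem_cons_of_mem x hy)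
    obtain ⟨hx, hbx⟩ := hL x List.mem_cons_self
    rcases hs.append_cases with hs | ⟨x', hx', rfl⟩
    · exact ih' hs
    · rcases eq_or_ne x' [] with rfl | hx'ne
      · exact ih' (List.suffix_refl _)
      · calc b ≤ x := hbx
          _ ≤ x' := hx.le_of_suffix hx' hx'ne
          _ ≤ x' ++ L.flatten := (List.prefix_append x' _).le'

section Factorization

variable {α : Type*} [LinearOrder α]

def IsLyndonFactorization (L : List (List α)) : Prop :=
  (∀ ℓ ∈ L, IsLyndon ℓ) ∧ L.Pairwise (· ≥ ·)

namespace IsLyndonFactorization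

theorem nil : IsLyndonFactorization ([] : List (List α)) := ⟨by simp, .nil⟩

theorem sublist {L M : List (List α)} (hL : IsLyndonFactorization L) (h : M.Sublist L) :
    IsLyndonFactorization M :=
  ⟨fun ℓ hℓ => hL.1 ℓ (h.subset hℓ), hL.2.sublist h⟩

theorem cons_of_le {u m : List α} {M : List (List α)} (hu : IsLyndon u)
    (hM : IsLyndonFactorization (m :: M)) (hmu : m ≤ u) : IsLyndonFactorization (u :: m :: M) := by
  refine ⟨List.forall_mem_cons.mpr ⟨hu, hM.1⟩, List.pairwise_cons.mpr ⟨?_, hM.2⟩⟩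
  rintro x (_ | ⟨_, hx⟩)
  · exact hmu
  · exact ((List.pairwise_cons.mp hM.2).1 x hx).trans hmu

theorem exists_flatten_eq_append {u : List α} (hu : IsLyndon u) {M : List (List α)}
    (hM : IsLyndonFactorization M) : ∃ L, IsLyndonFactorization L ∧ L.flatten = u ++ M.flatten := by
  induction M generalizing u with
  | nil => exact ⟨[u], ⟨by simpa using hu, List.pairwise_singleton _ _⟩, by simp⟩
  | cons m M ih =>
    by_cases hmu : m ≤ u
    · exact ⟨u :: m :: M, hM.cons_of_le hu hmu, rfl⟩
    · have hum : u < m := not_le.mp hmu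
      obtain ⟨L, hL, hflat⟩ := ih (hu.append (hM.1 m (by simp)) hum)
        (hM.sublist (List.sublist_cons_self m M))
      exact ⟨L, hL, by simp [hflat]⟩

theorem flatten_eq_nil_iff {L : List (List α)} (hL : IsLyndonFactorization L) :
    L.flatten = [] ↔ L = [] := by
  refine ⟨fun h => List.eq_nil_iff_forall_not_mem.mpr fun ℓ hℓ => ?_, fun h => by simp [h]⟩
  exact (hL.1 ℓ hℓ).ne_nil (List.flatten_eq_nil_iff.mp h ℓ hℓ)

theorem getLast_le_of_suffix {L : List (List α)} {ℓ s : List α}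
    (h : IsLyndonFactorization (L ++ [ℓ])) (hs : s <:+ (L ++ [ℓ]).flatten) (hne : s ≠ []) :
    ℓ ≤ s := by
  refine le_of_suffix_flatten_of_isLyndon (fun x hx => ⟨h.1 x hx, ?_⟩) hs hne
  rcases List.mem_append.mp hx with hx | hx
  · exact (List.pairwise_append.mp h.2).2.2 x hx ℓ (List.mem_singleton_self ℓ)
  · rw [List.mem_singleton.mp hx]

theorem eq_of_flatten_eq {L M : List (List α)} (hL : IsLyndonFactorization L)
    (hM : IsLyndonFactorization M) (h : L.flatten = M.flatten) : L = M := by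
  induction L using List.reverseRecOn generalizing M with
  | nil => exact (hM.flatten_eq_nil_iff.mp h.symm).symm
  | append_singleton L ℓ ih =>
    obtain rfl | ⟨M, m, rfl⟩ := M.eq_nil_or_concat'
    · exact hL.flatten_eq_nil_iff.mp h
    have hℓm : ℓ = m := le_antisymm
      (hL.getLast_le_of_suffix (by rw [h]; simp) (hM.1 m (by simp)).ne_nil)
      (hM.getLast_le_of_suffix (by rw [← h]; simp) (hL.1 ℓ (by simp)).ne_nil)
    subst hℓm
    have hflat : L.flatten = M.flatten := by simpa using h
    rw [ih (hL.sublist (by simp)) (hM.sublist (by simp)) hflat]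

end IsLyndonFactorization

theorem exists_isLyndonFactorization (w : List α) :
    ∃ L, IsLyndonFactorization L ∧ L.flatten = w := by
  induction w with
  | nil => exact ⟨[], .nil, rfl⟩
  | cons a w ih =>
    obtain ⟨M, hM, rfl⟩ := ih
    exact IsLyndonFactorization.exists_flatten_eq_append (IsLyndon.singleton a) hM

theorem isLyndonFactorization_iff {L : List (List α)} :
    IsLyndonFactorization L ↔
      (∀ ℓ ∈ L, IsLyndon ℓ) ∧ L.IsChain (fun u v => v = u ∨ List.Lex (· < ·) v u) := by
  have hrel : (fun u v : List α => v = u ∨ List.Lex (· < ·) v u) = (· ≥ ·) := by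
    funext u v
    exact propext le_iff_eq_or_lt.symm
  rw [hrel, List.isChain_iff_pairwise]
  rfl

end Factorization

theorem canonical_factorization_general {α : Type*} [LinearOrder α] (w : List α) :
    ∃! L : List (List α), w = L.flatten ∧ (∀ ℓ ∈ L, IsLyndon ℓ) ∧
      L.Chain' (fun u v => v = u ∨ List.Lex (· < ·) v u) := by
  obtain ⟨L, hL, rfl⟩ := exists_isLyndonFactorization w
  refine ⟨L, ⟨rfl, isLyndonFactorization_iff.mp hL⟩, fun M ⟨hw, hM⟩ => ?_⟩
  exact (isLyndonFactorization_iff.mpr hM).eq_of_flatten_eq hL hw.symm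

/-- Canonical factorization: every nonempty word admits a unique factorization
`w = ℓ₁ℓ₂⋯ℓ_k` into a lexicographically weakly decreasing sequence of Lyndon
words. -/
theorem canonical_factorization {α : Type*} [LinearOrder α] (w : List α)
    (hw : w ≠ []) :
    ∃! L : List (List α), w = L.flatten ∧ (∀ ℓ ∈ L, IsLyndon ℓ) ∧
      L.Chain' (fun u v => v = u ∨ List.Lex (· < ·) v u) :=
  canonical_factorization_general w
end

section
/- Over the alphabet {0,1,2} ordered by 1 < 2 < 0, for every k ≥ 1 the word 12(102)^{k-1}10 is a Lyndon word, i.e. it is strictly smaller than each of its proper nonempty suffixes. -/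
/-- A nonempty word is Lyndon w.r.t. a strict order `r` on letters if it is
lexicographically strictly smaller than all of its proper nonempty suffixes. -/
def IsLyndonRel {α : Type*} (r : α → α → Prop) (w : List α) : Prop :=
  w ≠ [] ∧ ∀ s : List α, s <:+ w → s ≠ [] → s ≠ w → List.Lex r w s

/-- The order `1 < 2 < 0` on the alphabet `{0,1,2}`. -/
def rel3 (a b : ℕ) : Prop :=
  (a = 1 ∧ b = 2) ∨ (a = 1 ∧ b = 0) ∨ (a = 2 ∧ b = 0)

/-- `(102)^m`: `m` consecutive copies of the block `102`. -/
def pow102 (m : ℕ) : List ℕ := (List.replicate m [1, 0, 2]).flatten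

lemma pow102_succ (m : ℕ) : pow102 (m + 1) = 1 :: 0 :: 2 :: pow102 m := by
  simp [pow102, List.replicate_succ]

lemma mem_pow102 {x : ℕ} {m : ℕ} (h : x ∈ pow102 m) : x = 0 ∨ x = 1 ∨ x = 2 := by
  induction m with
  | zero => simp [pow102] at h
  | succ n ih =>
    rw [pow102_succ] at h
    simp only [List.mem_cons] at h
    rcases h with h | h | h | h <;> [omega; omega; omega; exact ih h]

/-- Every occurrence of `1` in `(102)^m 10` is followed by `0`. -/
lemma good_pow102 (m : ℕ) : ∀ t, (1 :: t) <:+ (pow102 m ++ [1, 0]) → ∃ u, t = 0 :: u := by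
  induction m with
  | zero =>
    intro t h
    simp only [pow102, List.replicate, List.flatten_nil, List.nil_append] at h
    rw [List.suffix_cons_iff] at h
    rcases h with h | h
    · exact ⟨[], by simpa using h⟩
    · rw [List.suffix_cons_iff] at h
      rcases h with h | h
      · exact absurd h (by simp)
      · exact absurd h (by simp)
  | succ n ih =>
    intro t h
    rw [pow102_succ] at h
    simp only [List.cons_append] at h
    rw [List.suffix_cons_iff] at h
    rcases h with h | h
    · exact ⟨2 :: pow102 n ++ [1, 0], by simpa using h⟩
    · rw [List.suffix_cons_iff] at h
      rcases h with h | h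
      · exact absurd h (by simp)
      · rw [List.suffix_cons_iff] at h
        rcases h with h | h
        · exact absurd h (by simp)
        · exact ih t h

/-- For every `k ≥ 1`, the word `12(102)^{k-1}10` is Lyndon over `{0,1,2}`
with `1 < 2 < 0`, i.e. strictly smaller than each of its proper nonempty
suffixes. -/
theorem isLyndon_12_pow102_10 (k : ℕ) (hk : 1 ≤ k) :
    IsLyndonRel rel3 ([1, 2] ++ pow102 (k - 1) ++ [1, 0]) := by
  set m := k - 1 with hm
  constructor
  · simp
  · intro s hs hne hnew
    have hw : ([1, 2] ++ pow102 m ++ [1, 0]) = 1 :: 2 :: (pow102 m ++ [1, 0]) := by simp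
    rw [hw] at hs hnew ⊢
    rw [List.suffix_cons_iff] at hs
    rcases hs with hs | hs
    · exact absurd hs hnew
    · -- s <:+ 2 :: (pow102 m ++ [1,0])
      obtain ⟨a, t, rfl⟩ := List.exists_cons_of_ne_nil hne
      have ha : a ∈ 2 :: (pow102 m ++ [1, 0]) := hs.subset List.mem_cons_self
      have ha' : a = 0 ∨ a = 1 ∨ a = 2 := by
        simp only [List.mem_cons, List.mem_append] at ha
        rcases ha with h | h | h
        · omega
        · exact mem_pow102 h
        · simp at h; omega
      rcases ha' with rfl | rfl | rfl
      · exact List.Lex.rel (Or.inr (Or.inl ⟨rfl, rfl⟩))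
      · -- a = 1 : then s <:+ pow102 m ++ [1,0], so t = 0 :: u
        rw [List.suffix_cons_iff] at hs
        rcases hs with hs | hs
        · exact absurd hs (by simp)
        · obtain ⟨u, rfl⟩ := good_pow102 m t hs
          exact List.Lex.cons (List.Lex.rel (Or.inr (Or.inr ⟨rfl, rfl⟩)))
      · exact List.Lex.rel (Or.inl ⟨rfl, rfl⟩)
end

section
/- Over the alphabet {0,1,...,n} (n ≥ 3) with the standard order 1 < 2 < ... < n < 0, for all k ≥ 1 and all 2 < i ≤ j ≤ n the word W_{k,i,j} := (1 0 n (n-1) ... i 2 3 ... (i-1))^k i (i+1) ... j is a Lyndon word. -/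
/-- Rank of a letter of `{0,1,…,n}` in the standard order `1 < 2 < ⋯ < n < 0`. -/
def rank (n a : ℕ) : ℕ := if a = 0 then n else a - 1

/-- The standard order `1 < 2 < ⋯ < n < 0` on the alphabet `{0,1,…,n}`. -/
def relStd (n : ℕ) (a b : ℕ) : Prop := rank n a < rank n b

/-- The block `1 0 n (n-1) ⋯ i 2 3 ⋯ (i-1)`. -/
def block (n i : ℕ) : List ℕ :=
  [1, 0] ++ (List.range' i (n - i + 1)).reverse ++ List.range' 2 (i - 2)

/-- The word `W_{k,i,j} = (1 0 n ⋯ i 2 3 ⋯ (i-1))^k i (i+1) ⋯ j`. -/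
def W (n k i j : ℕ) : List ℕ :=
  (List.replicate k (block n i)).flatten ++ List.range' i (j - i + 1)


lemma suffix_append_cases {α : Type*} {s b : List α} :
    ∀ {a : List α}, s <:+ a ++ b → s <:+ b ∨ ∃ t, t <:+ a ∧ t ≠ [] ∧ s = t ++ b := by
  intro a
  induction a with
  | nil => intro h; exact Or.inl h
  | cons x a ih =>
    intro h
    rcases List.suffix_cons_iff.mp h with h | h
    · exact Or.inr ⟨x :: a, List.suffix_refl _, by simp, h⟩
    · rcases ih h with h | ⟨t, ht, hne, rfl⟩
      · exact Or.inl h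
      · exact Or.inr ⟨t, ht.trans (List.suffix_cons x a), hne, rfl⟩

lemma lex_append_left {α : Type*} (r : α → α → Prop) {u v : List α} (p : List α)
    (h : List.Lex r u v) : List.Lex r (p ++ u) (p ++ v) := by
  induction p with
  | nil => exact h
  | cons x p ih => exact List.Lex.cons ih

lemma block_eq_cons (n i : ℕ) : block n i = 1 :: (0 :: ((List.range' i (n - i + 1)).reverse ++ List.range' 2 (i - 2))) := by
  simp [block]

lemma one_not_mem_block_tail (n i : ℕ) (hi : 2 < i) :
    (1 : ℕ) ∉ (0 : ℕ) :: ((List.range' i (n - i + 1)).reverse ++ List.range' 2 (i - 2)) := by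
  simp only [List.mem_cons, List.mem_append, List.mem_reverse, List.mem_range']
  push_neg
  refine ⟨by omega, ?_, ?_⟩ <;> intro m hm <;> omega

lemma eq_block_of_suffix (n i : ℕ) (hi : 2 < i) {t : List ℕ}
    (ht : t <:+ block n i) (h1 : t.head? = some 1) : t = block n i := by
  rw [block_eq_cons] at ht ⊢
  rcases List.suffix_cons_iff.mp ht with h | h
  · exact h
  · exfalso
    cases t with
    | nil => simp at h1
    | cons c t =>
      simp only [List.head?_cons, Option.some.injEq] at h1
      subst h1
      exact one_not_mem_block_tail n i hi (h.mem (List.mem_cons_self))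

lemma key (n i : ℕ) (hi : 2 < i) (R : List ℕ) (hR : (1:ℕ) ∉ R) :
    ∀ k (s : List ℕ), s <:+ (List.replicate k (block n i)).flatten ++ R →
      s.head? = some 1 →
      ∃ m, 1 ≤ m ∧ m ≤ k ∧ s = (List.replicate m (block n i)).flatten ++ R := by
  intro k
  induction k with
  | zero =>
    intro s hs h1
    exfalso
    cases s with
    | nil => simp at h1
    | cons c s =>
      simp only [List.head?_cons, Option.some.injEq] at h1
      subst h1
      simp only [List.replicate, List.flatten_nil, List.nil_append] at hs
      exact hR (hs.mem (List.mem_cons_self))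
  | succ k ih =>
    intro s hs h1
    rw [List.replicate_succ, List.flatten_cons, List.append_assoc] at hs
    rcases suffix_append_cases hs with h | ⟨t, ht, htne, rfl⟩
    · rcases ih s h h1 with ⟨m, hm1, hmk, rfl⟩
      exact ⟨m, hm1, Nat.le_succ_of_le hmk, by rfl⟩
    · have htt : t.head? = some 1 := by
        cases t with
        | nil => exact absurd rfl htne
        | cons c t => simpa using h1
      have := eq_block_of_suffix n i hi ht htt
      subst this
      exact ⟨k + 1, by omega, le_refl _,
        by rw [List.replicate_succ, List.flatten_cons, List.append_assoc]⟩

lemma relStd_one (n a : ℕ) (hn : 1 ≤ n) (ha : a ≠ 1) : relStd n 1 a := by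
  unfold relStd rank
  by_cases h : a = 0 <;> simp [h] <;> omega

/-- Over `{0,…,n}` (`n ≥ 3`) with the standard order `1 < 2 < ⋯ < n < 0`:
for all `k ≥ 1` and all `2 < i ≤ j ≤ n`, the word `W_{k,i,j}` is Lyndon. -/
theorem isLyndon_W (n k i j : ℕ) (hn : 3 ≤ n) (hk : 1 ≤ k)
    (hi : 2 < i) (hij : i ≤ j) (hj : j ≤ n) :
    IsLyndonRel (relStd n) (W n k i j) := by
  have hR : (1:ℕ) ∉ List.range' i (j - i + 1) := by
    simp only [List.mem_range']
    push_neg; intro m hm; omega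
  have hWcons : ∃ w', W n k i j = 1 :: w' := by
    obtain ⟨k', rfl⟩ : ∃ k', k = k' + 1 := ⟨k - 1, by omega⟩
    rw [W, List.replicate_succ, List.flatten_cons, block_eq_cons]
    exact ⟨_, rfl⟩
  obtain ⟨w', hW⟩ := hWcons
  constructor
  · rw [hW]; simp
  · intro s hs hsne hsW
    cases s with
    | nil => exact absurd rfl hsne
    | cons a s' =>
      by_cases ha : a = 1
      · subst ha
        obtain ⟨m, hm1, hmk, hseq⟩ := key n i hi _ hR k (1 :: s') hs (by simp)
        have hmlt : m < k := by
          rcases lt_or_eq_of_le hmk with h | h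
          · exact h
          · exfalso; subst h; exact hsW hseq
        rw [hseq]
        have hWsplit : W n k i j =
            (List.replicate m (block n i)).flatten ++
              ((List.replicate (k - m) (block n i)).flatten ++ List.range' i (j - i + 1)) := by
          rw [W, ← List.append_assoc, ← List.flatten_append, ← List.replicate_add]
          congr 3
          omega
        rw [hWsplit]
        apply lex_append_left
        obtain ⟨d, hd⟩ : ∃ d, k - m = d + 1 := ⟨k - m - 1, by omega⟩
        rw [hd, List.replicate_succ, List.flatten_cons, block_eq_cons,
          List.range'_succ]
        exact List.Lex.rel (relStd_one n i (by omega) (by omega))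
      · rw [hW]
        exact List.Lex.rel (relStd_one n a (by omega) ha)
end

section
/- Let α(a→b) = α_a + α_{a+1} + ... + α_b denote the positive root of sl_{m+1} associated to the interval [a,b] of simple roots, and let ℓ be the Lalonde–Ram bijection from positive roots of sl_{m+1} to standard Lyndon words for a fixed total order on the simple root indices. If [a,b] ⊊ [a',b'] are intervals such that the minimal index (with respect to the chosen order) of [a',b'] lies in [a,b], then ℓ(α(a→b)) < ℓ(α(a'→b')) lexicographically. -/
private theorem myLexTrans {r : ℕ → ℕ → Prop} (hr : ∀ {x y z : ℕ}, r x y → r y z → r x z)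
    {l₁ l₂ l₃ : List ℕ} (h₁ : List.Lex r l₁ l₂) (h₂ : List.Lex r l₂ l₃) :
    List.Lex r l₁ l₃ := by
  induction h₁ generalizing l₃ with
  | nil => cases h₂ with
    | cons _ => exact List.Lex.nil
    | rel _ => exact List.Lex.nil
  | cons h ih => cases h₂ with
    | cons h' => exact List.Lex.cons (ih h')
    | rel h' => exact List.Lex.rel h'
  | rel h => cases h₂ with
    | cons h' => exact List.Lex.rel h
    | rel h' => exact List.Lex.rel (hr h h')

private theorem myLexTotal {r : ℕ → ℕ → Prop} (htri : ∀ x y : ℕ, r x y ∨ x = y ∨ r y x) :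
    ∀ l₁ l₂ : List ℕ, List.Lex r l₁ l₂ ∨ l₁ = l₂ ∨ List.Lex r l₂ l₁
  | [], [] => Or.inr (Or.inl rfl)
  | [], _ :: _ => Or.inl .nil
  | _ :: _, [] => Or.inr (Or.inr .nil)
  | a :: l₁, b :: l₂ => by
    rcases htri a b with h | rfl | h
    · exact Or.inl (.rel h)
    · exact (myLexTotal htri l₁ l₂).imp .cons (Or.imp (congrArg _) .cons)
    · exact Or.inr (Or.inr (.rel h))

private theorem myLexAppend (r : ℕ → ℕ → Prop) :
    ∀ (l : List ℕ) (x : ℕ) (t : List ℕ), List.Lex r l (l ++ x :: t)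
  | [], _, _ => .nil
  | _ :: l, x, t => .cons (myLexAppend r l x t)

/-- The head of `ℓ a b` is the `π`-minimal letter of `[a,b]`. -/
private theorem headMin
    (m : ℕ) (π : ℕ → ℕ) (hπ : Function.Injective π)
    (ℓ : ℕ → ℕ → List ℕ)
    (hbase : ∀ a : ℕ, 1 ≤ a → a ≤ m → ℓ a a = [a])
    (hsplit : ∀ a b : ℕ, 1 ≤ a → a < b → b ≤ m →
      ∃ c : ℕ, a ≤ c ∧ c < b ∧
        ((List.Lex (fun x y => π x < π y) (ℓ a c) (ℓ (c + 1) b) ∧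
            ℓ a b = ℓ a c ++ ℓ (c + 1) b) ∨
         (List.Lex (fun x y => π x < π y) (ℓ (c + 1) b) (ℓ a c) ∧
            ℓ a b = ℓ (c + 1) b ++ ℓ a c))) :
    ∀ (n a b : ℕ), b - a ≤ n → 1 ≤ a → a ≤ b → b ≤ m →
      ∃ i t, ℓ a b = i :: t ∧ a ≤ i ∧ i ≤ b ∧ ∀ d, a ≤ d → d ≤ b → π i ≤ π d := by
  intro n
  induction n with
  | zero =>
    intro a b hn h1 hab hbm
    have : a = b := by omega
    subst this
    exact ⟨a, [], hbase a h1 hbm, le_refl a, le_refl a, fun d h1 h2 => by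
      have : d = a := by omega
      simp [this]⟩
  | succ n ih =>
    intro a b hn h1 hab hbm
    rcases eq_or_lt_of_le hab with rfl | hlt
    · exact ⟨a, [], hbase a h1 hbm, le_refl a, le_refl a, fun d h1 h2 => by
        have : d = a := by omega
        simp [this]⟩
    · obtain ⟨c, hac, hcb, hcase⟩ := hsplit a b h1 hlt hbm
      obtain ⟨i₁, t₁, he₁, hai₁, hi₁c, hm₁⟩ :=
        ih a c (by omega) h1 hac (by omega)
      obtain ⟨i₂, t₂, he₂, hci₂, hi₂b, hm₂⟩ :=
        ih (c + 1) b (by omega) (by omega) (by omega) hbm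
      rcases hcase with ⟨hlex, heq⟩ | ⟨hlex, heq⟩
      · rw [he₁, he₂] at hlex
        have hne : i₁ ≠ i₂ := by omega
        have h12 : π i₁ < π i₂ := by
          cases hlex with
          | rel h => exact h
          | cons h => exact absurd rfl hne
        refine ⟨i₁, t₁ ++ ℓ (c + 1) b, by rw [heq, he₁]; rfl, hai₁, by omega, ?_⟩
        intro d hd1 hd2
        rcases le_or_gt d c with h | h
        · exact hm₁ d hd1 h
        · exact le_trans (le_of_lt h12) (hm₂ d (by omega) hd2)
      · rw [he₁, he₂] at hlex
        have hne : i₂ ≠ i₁ := by omega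
        have h21 : π i₂ < π i₁ := by
          cases hlex with
          | rel h => exact h
          | cons h => exact absurd rfl hne
        refine ⟨i₂, t₂ ++ ℓ a c, by rw [heq, he₂]; rfl, by omega, hi₂b, ?_⟩
        intro d hd1 hd2
        rcases le_or_gt d c with h | h
        · exact le_trans (le_of_lt h21) (hm₁ d hd1 h)
        · exact hm₂ d (by omega) hd2

/-- Positive roots of `sl_{m+1}` correspond to intervals `[a,b] ⊆ [1,m]` of
simple-root indices; `ℓ a b` denotes the standard Lyndon word of the root
`α(a→b) = α_a + ⋯ + α_b`.  The simple-root indices `1,…,m` carry an arbitrary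
total order, encoded by an injection `π : ℕ → ℕ` (letter `a` is smaller than
letter `b` iff `π a < π b`); words are compared in the induced lexicographic
order.  The Lalonde–Ram bijection `ℓ` is characterized by Leclerc's algorithm:
`ℓ a a = [a]`, and for `a < b`, `ℓ a b` is the lexicographically largest among
the concatenations of `ℓ a c` and `ℓ (c+1) b` (smaller word first) over all
splittings `a ≤ c < b`.

Claim: if `[a,b] ⊊ [a',b']` are intervals in `[1,m]` and the index of `[a',b']`
minimal with respect to the chosen order lies in `[a,b]`, then
`ℓ(α(a→b)) < ℓ(α(a'→b'))` lexicographically. -/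
theorem lalondeRam_interval_lt
    (m : ℕ) (π : ℕ → ℕ) (hπ : Function.Injective π)
    (ℓ : ℕ → ℕ → List ℕ)
    -- simple roots: `ℓ a a = [a]`
    (hbase : ∀ a : ℕ, 1 ≤ a → a ≤ m → ℓ a a = [a])
    -- Leclerc's algorithm, existence of an optimal splitting:
    (hsplit : ∀ a b : ℕ, 1 ≤ a → a < b → b ≤ m →
      ∃ c : ℕ, a ≤ c ∧ c < b ∧
        ((List.Lex (fun x y => π x < π y) (ℓ a c) (ℓ (c + 1) b) ∧
            ℓ a b = ℓ a c ++ ℓ (c + 1) b) ∨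
         (List.Lex (fun x y => π x < π y) (ℓ (c + 1) b) (ℓ a c) ∧
            ℓ a b = ℓ (c + 1) b ++ ℓ a c)))
    -- Leclerc's algorithm, maximality over all splittings:
    (hmax : ∀ a b c : ℕ, 1 ≤ a → a ≤ c → c < b → b ≤ m →
      (List.Lex (fun x y => π x < π y) (ℓ a c) (ℓ (c + 1) b) →
        ¬ List.Lex (fun x y => π x < π y) (ℓ a b) (ℓ a c ++ ℓ (c + 1) b)) ∧
      (List.Lex (fun x y => π x < π y) (ℓ (c + 1) b) (ℓ a c) →
        ¬ List.Lex (fun x y => π x < π y) (ℓ a b) (ℓ (c + 1) b ++ ℓ a c)))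
    -- the intervals `[a,b] ⊊ [a',b'] ⊆ [1,m]`
    (a b a' b' : ℕ) (ha' : 1 ≤ a') (haa : a' ≤ a) (hab : a ≤ b) (hbb : b ≤ b')
    (hb' : b' ≤ m) (hproper : a' < a ∨ b < b')
    -- the minimal index of `[a',b']` lies in `[a,b]`
    (hmin : ∃ c : ℕ, a ≤ c ∧ c ≤ b ∧ ∀ d : ℕ, a' ≤ d → d ≤ b' → π c ≤ π d) :
    List.Lex (fun x y => π x < π y) (ℓ a b) (ℓ a' b') := by
  obtain ⟨i, hai, hib, hmini⟩ := hmin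
  have h1a : 1 ≤ a := le_trans ha' haa
  have htri : ∀ x y : ℕ, π x < π y ∨ x = y ∨ π y < π x := by
    intro x y
    rcases lt_trichotomy (π x) (π y) with h | h | h
    · exact Or.inl h
    · exact Or.inr (Or.inl (hπ h))
    · exact Or.inr (Or.inr h)
  have htr : ∀ {x y z : ℕ}, π x < π y → π y < π z → π x < π z :=
    fun h1 h2 => lt_trans h1 h2
  have hT : ∀ {l₁ l₂ l₃ : List ℕ}, List.Lex (fun x y => π x < π y) l₁ l₂ →
      List.Lex (fun x y => π x < π y) l₂ l₃ → List.Lex (fun x y => π x < π y) l₁ l₃ :=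
    fun h1 h2 => myLexTrans (r := fun x y => π x < π y) (fun hx hy => htr hx hy) h1 h2
  have hHM := headMin m π hπ ℓ hbase hsplit
  -- extending the interval to the right (same left endpoint `a`) increases the word
  have stepB : b < b' → List.Lex (fun x y => π x < π y) (ℓ a b) (ℓ a b') := by
    intro hbb'
    obtain ⟨i₁, t₁, he₁, hai₁, hi₁b, hm₁⟩ :=
      hHM (b - a) a b (le_refl _) h1a hab (le_trans hbb hb')
    obtain ⟨i₂, t₂, he₂, hbi₂, hi₂b', _⟩ :=
      hHM (b' - (b + 1)) (b + 1) b' (le_refl _) (by omega) (by omega) hb'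
    have hπ12 : π i₁ < π i₂ := by
      have h1 : π i₁ ≤ π i := hm₁ i hai hib
      have h2 : π i ≤ π i₂ := hmini i₂ (by omega) (by omega)
      have hne : i₁ ≠ i₂ := by omega
      rcases lt_or_eq_of_le (le_trans h1 h2) with h | h
      · exact h
      · exact absurd (hπ h) hne
    have hlex : List.Lex (fun x y => π x < π y) (ℓ a b) (ℓ (b + 1) b') := by
      rw [he₁, he₂]; exact List.Lex.rel hπ12
    have hnl := (hmax a b' b h1a hab hbb' hb').1 hlex
    have hpre : List.Lex (fun x y => π x < π y) (ℓ a b) (ℓ a b ++ ℓ (b + 1) b') := by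
      rw [he₂]; exact myLexAppend _ _ _ _
    rcases myLexTotal htri (ℓ a b') (ℓ a b ++ ℓ (b + 1) b') with h | h | h
    · exact absurd h hnl
    · rw [← h] at hpre; exact hpre
    · exact hT hpre h
  rcases eq_or_lt_of_le haa with rfl | haa'
  · rcases hproper with h | h
    · omega
    · exact stepB h
  · -- case `a' < a`
    have ha2 : a' ≤ a - 1 := by omega
    obtain ⟨i₁, t₁, he₁, ha'i₁, hi₁a, _⟩ :=
      hHM (a - 1 - a') a' (a - 1) (le_refl _) ha' ha2 (by omega)
    obtain ⟨i₂, t₂, he₂, hai₂, hi₂b', hm₂⟩ :=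
      hHM (b' - a) a b' (le_refl _) h1a (by omega) hb'
    have heqi : i₂ = i := by
      have h1 : π i₂ ≤ π i := hm₂ i hai (by omega)
      have h2 : π i ≤ π i₂ := hmini i₂ (by omega) hi₂b'
      exact hπ (le_antisymm h1 h2)
    have hπ21 : π i₂ < π i₁ := by
      subst heqi
      have h2 : π i₂ ≤ π i₁ := hmini i₁ ha'i₁ (by omega)
      have hne : i₂ ≠ i₁ := by omega
      rcases lt_or_eq_of_le h2 with h | h
      · exact h
      · exact absurd (hπ h) hne
    have hc1 : a - 1 + 1 = a := by omega
    have hm2' := (hmax a' b' (a - 1) ha' ha2 (by omega) hb').2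
    rw [hc1] at hm2'
    have hlex : List.Lex (fun x y => π x < π y) (ℓ a b') (ℓ a' (a - 1)) := by
      rw [he₁, he₂]; exact List.Lex.rel hπ21
    have hnl := hm2' hlex
    have h3 : List.Lex (fun x y => π x < π y) (ℓ a b) (ℓ a b' ++ ℓ a' (a - 1)) := by
      rcases eq_or_lt_of_le hbb with rfl | hb
      · rw [he₁]; exact myLexAppend _ _ _ _
      · exact hT (stepB hb) (by rw [he₁]; exact myLexAppend _ _ _ _)
    rcases myLexTotal htri (ℓ a' b') (ℓ a b' ++ ℓ a' (a - 1)) with h | h | h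
    · exact absurd h hnl
    · rw [← h] at h3; exact h3
    · exact hT h3 h
end

section
/- Over the alphabet {0,1} ordered by 1 < 0, define SL(kδ+α₁) = 1(10)^k, SL(kδ+α₀) = (10)^k 0, SL((k+1)δ) = 1(10)^k 0 for k ≥ 0. Then the induced total order on the extended affine root system of sl₂-hat satisfies: α₁ < α₁+δ < α₁+2δ < ... < 3δ < 2δ < δ < ... < 2δ+α₀ < δ+α₀ < α₀, i.e., SL(kδ+α₁) < SL((k+1)δ+α₁) for all k, SL((k+1)δ) < SL(kδ) for all k ≥ 1, SL((k+1)δ+α₀) < SL(kδ+α₀) for all k, and SL(kδ+α₁) < SL(mδ) < SL(lδ+α₀) for all k ≥ 0, m ≥ 1, l ≥ 0. -/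
/-- The order `1 < 0` on the alphabet `{0,1}`. -/
def rel2 (a b : ℕ) : Prop := a = 1 ∧ b = 0

/-- `(10)^k`: `k` consecutive copies of the block `10`. -/
def pow10 (k : ℕ) : List ℕ := (List.replicate k [1, 0]).flatten

/-- The affine standard Lyndon word `SL(kδ+α₁) = 1(10)^k`. -/
def SLa1 (k : ℕ) : List ℕ := 1 :: pow10 k

/-- The affine standard Lyndon word `SL(kδ+α₀) = (10)^k 0`. -/
def SLa0 (k : ℕ) : List ℕ := pow10 k ++ [0]

/-- The affine standard Lyndon word `SL(kδ) = 1(10)^{k-1} 0` for `k ≥ 1`. -/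
def SLd (k : ℕ) : List ℕ := 1 :: (pow10 (k - 1) ++ [0])

lemma pow10_succ (k : ℕ) : pow10 (k + 1) = 1 :: 0 :: pow10 k := by
  simp [pow10, List.replicate_succ]

lemma r10 : rel2 1 0 := ⟨rfl, rfl⟩

lemma lemA : ∀ k, List.Lex rel2 (pow10 k) (pow10 (k + 1)) := by
  intro k
  induction k with
  | zero => rw [pow10_succ]; exact List.Lex.nil
  | succ n ih => rw [pow10_succ (n+1), pow10_succ n]; exact .cons (.cons ih)

lemma lemC : ∀ j, List.Lex rel2 (pow10 (j + 1) ++ [0]) (pow10 j ++ [0]) := by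
  intro j
  induction j with
  | zero => exact .rel r10
  | succ n ih =>
    rw [pow10_succ, pow10_succ n]
    exact .cons (.cons ih)

lemma lemD : ∀ k j, List.Lex rel2 (pow10 k) (pow10 j ++ [0]) := by
  intro k
  induction k with
  | zero =>
    intro j
    cases j with
    | zero => exact List.Lex.nil
    | succ n => rw [pow10_succ]; exact List.Lex.nil
  | succ n ih =>
    intro j
    cases j with
    | zero => rw [pow10_succ]; exact .rel r10
    | succ m => rw [pow10_succ, pow10_succ m]; exact .cons (.cons (ih m))

lemma nil_lex {l : List ℕ} (h : l ≠ []) : List.Lex rel2 [] l := by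
  cases l with
  | nil => exact absurd rfl h
  | cons a t => exact .nil

lemma lemE : ∀ j l, List.Lex rel2 (1 :: (pow10 j ++ [0])) (pow10 l ++ [0]) := by
  intro j l
  cases l with
  | zero => exact .rel r10
  | succ m =>
    rw [pow10_succ]
    refine .cons ?_
    cases j with
    | zero =>
      show List.Lex rel2 [0] (0 :: (pow10 m ++ [0]))
      exact .cons (nil_lex (by simp))
    | succ n => rw [pow10_succ]; exact .rel r10

/-- The induced order on the extended affine root system of `sl₂-hat` is
`α₁ < α₁+δ < α₁+2δ < ⋯ < 3δ < 2δ < δ < ⋯ < 2δ+α₀ < δ+α₀ < α₀`: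
`SL(kδ+α₁) < SL((k+1)δ+α₁)`, `SL((k+1)δ) < SL(kδ)` for `k ≥ 1`,
`SL((k+1)δ+α₀) < SL(kδ+α₀)`, and `SL(kδ+α₁) < SL(mδ) < SL(lδ+α₀)` for all
`k, l ≥ 0`, `m ≥ 1`. -/
theorem sl2hat_induced_order :
    (∀ k : ℕ, List.Lex rel2 (SLa1 k) (SLa1 (k + 1))) ∧
    (∀ k : ℕ, 1 ≤ k → List.Lex rel2 (SLd (k + 1)) (SLd k)) ∧
    (∀ k : ℕ, List.Lex rel2 (SLa0 (k + 1)) (SLa0 k)) ∧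
    (∀ k m l : ℕ, 1 ≤ m →
      List.Lex rel2 (SLa1 k) (SLd m) ∧ List.Lex rel2 (SLd m) (SLa0 l)) := by
  refine ⟨fun k => .cons (lemA k), fun k hk => ?_, lemC, fun k m l hm => ?_⟩
  · obtain ⟨j, rfl⟩ := Nat.exists_eq_add_of_le hk
    simp only [SLd, Nat.add_sub_cancel_left, Nat.add_comm 1 j]
    exact .cons (lemC j)
  · obtain ⟨j, rfl⟩ := Nat.exists_eq_add_of_le hm
    simp only [SLd, SLa1, SLa0, Nat.add_sub_cancel_left, Nat.add_comm 1 j]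
    exact ⟨.cons (lemD k j), lemE j l⟩
end
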